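/- Let K be a compact Hausdorff space. The Banach space C(K) of continuous real-valued functions on K has the Daugavet property if and only if K has no isolated points. Moreover, if K has an isolated point a, then there exists y ∈ S_{C(K)} (namely the indicator of {a}) such that for every f ∈ B_{C(K)}, min(‖y + f‖, ‖y − f‖) ≤ 1. -/

import Mathlib

universe u

/-- A slice of the closed unit ball of `X`. -/
def ballSlice {X : Type u} [NormedAddCommGroup X] [NormedSpace ℝ X]
    (f : X →L[ℝ] ℝ) (a : ℝ) : Set X :=
  {x | ‖x‖ ≤ 1 ∧ ‖f‖ - a < f x}

/-- The Daugavet property in the slice formulation. -/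
def HasDaugavetProp (X : Type u) [NormedAddCommGroup X] [NormedSpace ℝ X] : Prop :=
  ∀ y : X, ‖y‖ = 1 →
    ∀ (f : X →L[ℝ] ℝ) (a : ℝ), 0 < a → ∀ ε : ℝ, 0 < ε →
      ∃ x ∈ ballSlice f a, 2 - ε < ‖y + x‖

/-!
If `a` is an isolated point, every `x` in the unit ball with `x a ≥ 0` satisfies
`‖𝟙_{a} - x‖ ≤ 1`; the slice `{x a > ‖δ_a‖ - 1}` then violates the Daugavet inequality for
`y = -𝟙_{a}`, and `±f` handles the `min` bound.

Conversely, if `K` has no isolated points, every nonempty open set is infinite. A functional `f`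
cannot be `≥ δ` on unit vectors supported near each of more than `‖f‖ / δ` points with disjoint
neighbourhoods (their sum is still a unit vector), so every infinite open set contains an open
`W` on which `f` is negligible. Take `W` where `|y|` is close to `1`, a point `t ∈ W`, and an
almost norming `x₀`; bending `x₀` by an Urysohn function supported in `W` to the value
`sign (y t)` at `t` keeps it in the slice and gives `‖y + x‖ ≥ |y t| + 1`.
-/

open Topology Function

lemma exists_mem_ballSlice {X : Type u} [NormedAddCommGroup X] [NormedSpace ℝ X]
    (f : X →L[ℝ] ℝ) {a : ℝ} (ha : 0 < a) : (ballSlice f a).Nonempty := by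
  obtain ⟨x, hx, hfx⟩ := f.exists_lt_apply_of_lt_opNorm (sub_lt_self ‖f‖ ha)
  rcases le_or_gt 0 (f x) with hpos | hneg
  · exact ⟨x, hx.le, by rwa [Real.norm_of_nonneg hpos] at hfx⟩
  · refine ⟨-x, by rw [norm_neg]; exact hx.le, ?_⟩
    rwa [Real.norm_of_nonpos hneg.le, ← map_neg] at hfx

section CompactSpace

variable {K : Type u} [TopologicalSpace K] [CompactSpace K]

lemma norm_sum_le_of_pairwise_disjoint_support {ι : Type*} (s : Finset ι) {h : ι → C(K, ℝ)}
    (hdisj : Pairwise (Disjoint on fun i => support (h i))) {C : ℝ} (hC : 0 ≤ C)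
    (hh : ∀ i, ‖h i‖ ≤ C) : ‖∑ i ∈ s, h i‖ ≤ C := by
  have hmul : Pairwise ((· * · = 0) on h) := fun i j hij => by
    ext t
    by_contra hne
    exact Set.disjoint_left.1 (hdisj hij) (left_ne_zero_of_mul hne) (right_ne_zero_of_mul hne)
  rw [← coe_nnnorm, ContinuousMap.nnnorm_sum_eq_sup s hmul, ← NNReal.coe_mk C hC,
    NNReal.coe_le_coe]
  exact Finset.sup_le fun i _ => hh i

lemma norm_add_mul_sub_le {g h φ : C(K, ℝ)} {C : ℝ} (hg : ‖g‖ ≤ C) (hh : ‖h‖ ≤ C)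
    (hφ : ∀ t, φ t ∈ Set.Icc 0 1) : ‖g + φ * (h - g)‖ ≤ C := by
  have hC : 0 ≤ C := (norm_nonneg g).trans hg
  refine (ContinuousMap.norm_le _ hC).2 fun t => ?_
  have hmem (k : C(K, ℝ)) (hk : ‖k‖ ≤ C) : k t ∈ Metric.closedBall 0 C :=
    mem_closedBall_zero_iff.2 ((k.norm_coe_le_norm t).trans hk)
  exact mem_closedBall_zero_iff.1
    ((convex_closedBall 0 C).add_smul_sub_mem (hmem g hg) (hmem h hh) (hφ t))

variable [T2Space K]

lemma exists_isOpen_forall_apply_lt (f : C(K, ℝ) →L[ℝ] ℝ) {V : Set K} (hV : IsOpen V)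
    (hVinf : V.Infinite) {δ : ℝ} (hδ : 0 < δ) :
    ∃ W ⊆ V, IsOpen W ∧ W.Nonempty ∧ ∀ h : C(K, ℝ), ‖h‖ ≤ 1 → support h ⊆ W → f h < δ := by
  by_contra! hcon
  obtain ⟨n, hn⟩ := exists_nat_gt (‖f‖ / δ)
  obtain ⟨s, hsV, rfl⟩ := hVinf.exists_subset_card_eq n
  obtain ⟨U, hU, hdisj⟩ := s.finite_toSet.t2_separation
  have (t : s) : ∃ h : C(K, ℝ), ‖h‖ ≤ 1 ∧ support h ⊆ U t ∧ δ ≤ f h := by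
    obtain ⟨h, hnorm, hsupp, hfh⟩ := hcon (U t ∩ V) Set.inter_subset_right
      ((hU t).2.inter hV) ⟨t, (hU t).1, hsV t.2⟩
    exact ⟨h, hnorm, hsupp.trans Set.inter_subset_left, hfh⟩
  choose h hnorm hsupp hfh using this
  have hdisj' : Pairwise (Disjoint on fun t : s => support (h t)) := fun t t' htt' =>
    (hdisj t.2 t'.2 (Subtype.coe_ne_coe.2 htt')).mono (hsupp t) (hsupp t')
  have hsum : ‖∑ t, h t‖ ≤ 1 :=
    norm_sum_le_of_pairwise_disjoint_support _ hdisj' zero_le_one hnorm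
  have : s.card * δ ≤ ‖f‖ := calc
    (s.card : ℝ) * δ = ∑ _t : s, δ := by simp
    _ ≤ ∑ t, f (h t) := Finset.sum_le_sum fun t _ => hfh t
    _ = f (∑ t, h t) := (map_sum f _ _).symm
    _ ≤ ‖f‖ := (le_abs_self _).trans ((f.le_opNorm_of_le hsum).trans_eq (mul_one _))
  rw [div_lt_iff₀ hδ] at hn
  linarith

lemma exists_mem_ballSlice_apply_eq (f : C(K, ℝ) →L[ℝ] ℝ) {a : ℝ} (ha : 0 < a) {V : Set K}
    (hV : IsOpen V) (hVinf : V.Infinite) (c : K → ℝ) (hc : ∀ t, |c t| ≤ 1) :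
    ∃ x ∈ ballSlice f a, ∃ t ∈ V, x t = c t := by
  obtain ⟨x₀, hx₀, hfx₀⟩ := exists_mem_ballSlice f (half_pos ha)
  obtain ⟨W, hWV, hW, ⟨t, htW⟩, hWf⟩ :=
    exists_isOpen_forall_apply_lt f hV hVinf (by positivity : 0 < a / 4)
  obtain ⟨φ, hφW, hφt, hφ⟩ := exists_continuous_zero_one_of_isClosed hW.isClosed_compl
    isClosed_singleton (Set.disjoint_singleton_right.2 (not_not.2 htW))
  set e := ContinuousMap.const K (c t)
  set h := φ * (e - x₀)
  have he : ‖e‖ ≤ 1 := (ContinuousMap.norm_le _ zero_le_one).2 fun _ => hc t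
  have hφ_norm : ‖φ‖ ≤ 1 := (ContinuousMap.norm_le _ zero_le_one).2 fun s => by
    rw [Real.norm_of_nonneg (hφ s).1]; exact (hφ s).2
  have hh_norm : ‖h‖ ≤ 2 := calc
    ‖h‖ ≤ ‖φ‖ * ‖e - x₀‖ := norm_mul_le _ _
    _ ≤ 1 * (1 + 1) := by gcongr; exact (norm_sub_le _ _).trans (add_le_add he hx₀)
    _ = 2 := by norm_num
  have hh_supp : support h ⊆ W := fun s hs =>
    by_contra fun hsW => hs (by simp [h, hφW hsW])
  have hfh : -(a / 2) < f h := by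
    have := hWf (-(2⁻¹ : ℝ) • h) (by rw [norm_smul]; norm_num; linarith)
      ((support_const_smul_subset _ _).trans hh_supp)
    rw [map_smul, smul_eq_mul] at this
    linarith
  refine ⟨x₀ + h, ⟨norm_add_mul_sub_le hx₀ he hφ, ?_⟩, t, hWV htW, ?_⟩
  · rw [map_add]
    linarith
  · simp [h, e, hφt rfl]

lemma hasDaugavetProp_continuousMap [∀ x : K, (𝓝[≠] x).NeBot] : HasDaugavetProp C(K, ℝ) := by
  intro y hy f a ha ε hε
  have hV : IsOpen {t | 1 - ε < |y t|} := isOpen_lt continuous_const (map_continuous y).abs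
  obtain ⟨t₀, ht₀⟩ : ∃ t, 1 - ε < |y t| := by
    by_contra! h
    have := (ContinuousMap.norm_le y (le_max_right (1 - ε) 0)).2 fun t =>
      (h t).trans (le_max_left _ _)
    rw [hy, le_max_iff] at this
    rcases this with h | h <;> linarith
  obtain ⟨x, hx, t, ht, hxt⟩ := exists_mem_ballSlice_apply_eq f ha hV
    (infinite_of_mem_nhds t₀ (hV.mem_nhds ht₀)) (fun t => if 0 ≤ y t then 1 else -1)
    (fun t => by split_ifs <;> norm_num)
  refine ⟨x, hx, ?_⟩
  have hsign : |y t + x t| = |y t| + 1 := by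
    rw [hxt]
    split_ifs with hyt
    · rw [abs_of_nonneg hyt, abs_of_nonneg (by linarith)]
    · rw [abs_of_neg (not_le.1 hyt), abs_of_neg (by linarith)]
      ring
  calc 2 - ε < |y t| + 1 := by linarith [show 1 - ε < |y t| from ht]
    _ = ‖(y + x) t‖ := hsign.symm
    _ ≤ ‖y + x‖ := (y + x).norm_coe_le_norm t

end CompactSpace

section IsolatedPoint

variable {K : Type u} [TopologicalSpace K] [CompactSpace K] {a : K}

lemma exists_continuousMap_indicator_singleton [T1Space K] (ha : IsOpen ({a} : Set K)) :
    ∃ y : C(K, ℝ), ‖y‖ = 1 ∧ y a = 1 ∧ ∀ x, x ≠ a → y x = 0 := by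
  let y : C(K, ℝ) := ⟨({a} : Set K).indicator 1,
    IsClopen.continuous_indicator ⟨isClosed_singleton, ha⟩ continuous_const⟩
  have hya : y a = 1 := by simp [y]
  have hy : ∀ x, x ≠ a → y x = 0 := fun x hx => by simp [y, hx]
  refine ⟨y, le_antisymm ((ContinuousMap.norm_le _ zero_le_one).2 fun x => ?_) ?_, hya, hy⟩
  · rcases eq_or_ne x a with rfl | hx
    · simp [hya]
    · simp [hy x hx]
  · simpa [hya] using y.norm_coe_le_norm a

variable {y f : C(K, ℝ)}

lemma norm_sub_le_one_of_apply_nonneg (hya : y a = 1) (hy : ∀ x, x ≠ a → y x = 0)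
    (hf : ‖f‖ ≤ 1) (hfa : 0 ≤ f a) : ‖y - f‖ ≤ 1 := by
  refine (ContinuousMap.norm_le _ zero_le_one).2 fun x => ?_
  have hfx : |f x| ≤ 1 := (f.norm_coe_le_norm x).trans hf
  rcases eq_or_ne x a with rfl | hx
  · rw [ContinuousMap.sub_apply, hya, Real.norm_eq_abs, abs_le]
    constructor <;> linarith [abs_le.1 hfx]
  · simpa [hy x hx] using hfx

lemma min_norm_add_norm_sub_le_one (hya : y a = 1) (hy : ∀ x, x ≠ a → y x = 0)
    (hf : ‖f‖ ≤ 1) : min ‖y + f‖ ‖y - f‖ ≤ 1 := by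
  rcases le_total 0 (f a) with hfa | hfa
  · exact (min_le_right _ _).trans (norm_sub_le_one_of_apply_nonneg hya hy hf hfa)
  · refine (min_le_left _ _).trans ?_
    simpa using norm_sub_le_one_of_apply_nonneg hya hy (f := -f) (by rwa [norm_neg]) (by simpa)

lemma not_hasDaugavetProp_continuousMap (hyn : ‖y‖ = 1) (hya : y a = 1)
    (hy : ∀ x, x ≠ a → y x = 0) : ¬ HasDaugavetProp C(K, ℝ) := by
  intro hD
  let δ : C(K, ℝ) →L[ℝ] ℝ := ContinuousMap.evalCLM ℝ a
  have hδ : 1 ≤ ‖δ‖ := by simpa [δ, hya, hyn] using δ.le_opNorm y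
  obtain ⟨x, ⟨hx, hδx⟩, hyx⟩ := hD (-y) (by rwa [norm_neg]) δ 1 one_pos 1 one_pos
  have hxa : 0 ≤ x a := by
    change ‖δ‖ - 1 < x a at hδx
    linarith
  have := norm_sub_le_one_of_apply_nonneg hya hy hx hxa
  rw [neg_add_eq_sub, norm_sub_rev] at hyx
  linarith

end IsolatedPoint

/-- `C(K)` has the Daugavet property if and only if the compact Hausdorff space `K` has
no isolated points; moreover, if `K` has an isolated point `a`, then some unit vector
`y` of `C(K)` (the indicator of `{a}`) satisfies `min ‖y + f‖ ‖y - f‖ ≤ 1` for every `f`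
in the closed unit ball. -/
theorem ck_daugavet_iff_no_isolated (K : Type u) [TopologicalSpace K] [CompactSpace K]
    [T2Space K] :
    (HasDaugavetProp C(K, ℝ) ↔ ∀ x : K, ¬ IsOpen ({x} : Set K)) ∧
      (∀ a : K, IsOpen ({a} : Set K) →
        ∃ y : C(K, ℝ), ‖y‖ = 1 ∧ (y a = 1 ∧ ∀ x : K, x ≠ a → y x = 0) ∧
          ∀ f : C(K, ℝ), ‖f‖ ≤ 1 → min ‖y + f‖ ‖y - f‖ ≤ 1) := by
  refine ⟨⟨fun hD a ha => ?_, fun hK => ?_⟩, fun a ha => ?_⟩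
  · obtain ⟨y, hyn, hya, hy⟩ := exists_continuousMap_indicator_singleton ha
    exact not_hasDaugavetProp_continuousMap hyn hya hy hD
  · have (x : K) : (𝓝[≠] x).NeBot :=
      ⟨by rw [Ne, ← isOpen_singleton_iff_punctured_nhds]; exact hK x⟩
    exact hasDaugavetProp_continuousMap
  · obtain ⟨y, hyn, hya, hy⟩ := exists_continuousMap_indicator_singleton ha
    exact ⟨y, hyn, ⟨hya, hy⟩, fun f hf => min_norm_add_norm_sub_le_one hya hy hf⟩
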